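/- If A is quasi-Eulerian with respect to c ∈ ℕ, then 𝔠(A) ≤ 2^c (n−c+1)(n−1). -/

import Mathlib

open Matrix

/-- The 0-1 transition matrix of a letter: `(p,q)`-entry is 1 iff `δ q a = p`. -/
def letterMat {n k : ℕ} (δ : Fin n → Fin k → Fin n) (a : Fin k) :
    Matrix (Fin n) (Fin n) ℝ :=
  fun p q => if δ q a = p then 1 else 0

/-- The matrix of a word, satisfying `[u][K] = [K·u]`. -/
def wordMat {n k : ℕ} (δ : Fin n → Fin k → Fin n) (w : List (Fin k)) :
    Matrix (Fin n) (Fin n) ℝ :=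
  (w.reverse.map (letterMat δ)).prod

/-- The action of a word on a state. -/
def act {n k : ℕ} (δ : Fin n → Fin k → Fin n) (w : List (Fin k)) (q : Fin n) : Fin n :=
  w.foldl δ q

/-- A word is a reset word if it maps all states to one state. -/
def IsReset {n k : ℕ} (δ : Fin n → Fin k → Fin n) (w : List (Fin k)) : Prop :=
  ∀ p q : Fin n, act δ w p = act δ w q

/-- `A` is quasi-Eulerian with respect to `c`: there is a set `E` of `n - c`
states with an entry state `s ∈ E` such that only `s` has incoming edges from
outside `E`, and for some positive probability vector `p`, the rows of
`S = Σ_a p(a)[a]` corresponding to states of `E \ {s}` are stochastic. -/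
def QuasiEulerian {n k : ℕ} (δ : Fin n → Fin k → Fin n) (c : ℕ) : Prop :=
  ∃ (E : Finset (Fin n)) (s : Fin n) (p : Fin k → ℝ),
    s ∈ E ∧ E.card = n - c ∧
    (∀ a, 0 < p a) ∧ (∑ a, p a = 1) ∧
    (∀ q a, δ q a ∈ E → δ q a ≠ s → q ∈ E) ∧
    (∀ i ∈ E, i ≠ s → ∑ j, (∑ a, p a • letterMat δ a) i j = 1)

/-!
The averaged matrix `S = ∑ₐ p(a)[a]` is column-stochastic, so it has a stationary vector `α`,
positive because `A` is strongly connected. Every predecessor of a state of `E \ {s}` lies in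
`E`, and the rows of `S` at these states are stochastic, so a maximum principle forces `α` to be
constant on `E`; hence the weights `α(T) = ∑_{q ∈ T} α(q)` of sets of states take at most
`(n - c + 1) 2^c` values.

Stationarity says that `α(T)` is the `p`-average of the weights of the preimages of `T` under the
letters. If no word of length `< n` increased the weight of a proper nonempty `T`, all preimages
under such words would therefore have the weight of `T`; since the Krylov spaces spanned by the
vectors `[u] α` stabilise after `n` steps, every word would preserve that weight. A reset word
followed by a path into `T` pulls `T` back to all states, a contradiction. So, starting from a
singleton, some word of length `≤ n - 1` strictly raises the weight at each step, and after at
most `(n - c + 1) 2^c` steps the preimage is everything.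
-/

open Finset Module

section Krylov

variable {𝕜 V ι : Type*} [Field 𝕜] [AddCommGroup V] [Module 𝕜 V] (f : ι → Module.End 𝕜 V) (x : V)

def krylov (t : ℕ) : Submodule 𝕜 V :=
  Submodule.span 𝕜 ((fun u : List ι => (u.map f).prod x) '' {u | u.length < t})

variable {f x}

lemma mem_krylov {u : List ι} {t : ℕ} (h : u.length < t) : (u.map f).prod x ∈ krylov f x t :=
  Submodule.subset_span ⟨u, h, rfl⟩

lemma krylov_mono : Monotone (krylov f x) := fun _ _ h =>
  Submodule.span_mono (Set.image_mono fun _ hu => lt_of_lt_of_le hu h)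

lemma map_krylov_le (a : ι) (t : ℕ) : (krylov f x t).map (f a) ≤ krylov f x (t + 1) := by
  rw [krylov, Submodule.map_span, Submodule.span_le]
  rintro _ ⟨_, ⟨u, hu, rfl⟩, rfl⟩
  simpa using mem_krylov (f := f) (x := x) (u := a :: u) (by simpa using hu)

lemma krylov_succ_succ_le {t : ℕ} (h : krylov f x (t + 1) ≤ krylov f x t) :
    krylov f x (t + 2) ≤ krylov f x (t + 1) := by
  refine Submodule.span_le.2 ?_
  rintro _ ⟨_ | ⟨a, u⟩, hu, rfl⟩
  · exact mem_krylov (u := []) t.succ_pos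
  · have hu : (u.map f).prod x ∈ krylov f x t := h (mem_krylov (by simpa using hu))
    simpa using map_krylov_le a t ⟨_, hu, rfl⟩

lemma krylov_le_of_succ_le {t : ℕ} (h : krylov f x (t + 1) ≤ krylov f x t) (s : ℕ) :
    krylov f x s ≤ krylov f x t := by
  have hstable : ∀ s, t ≤ s → krylov f x (s + 1) ≤ krylov f x s := fun s hs =>
    Nat.le_induction h (fun _ _ => krylov_succ_succ_le) s hs
  rcases le_total s t with hs | hs
  · exact krylov_mono hs
  · induction s, hs using Nat.le_induction with
    | base => exact le_rfl
    | succ s hs ih => exact (hstable s hs).trans ih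

variable [FiniteDimensional 𝕜 V]

lemma exists_krylov_succ_le : ∃ t ≤ finrank 𝕜 V, krylov f x (t + 1) ≤ krylov f x t := by
  by_contra! h
  have hgrow : ∀ t ≤ finrank 𝕜 V + 1, t ≤ finrank 𝕜 (krylov f x t) := by
    intro t ht
    induction t with
    | zero => exact Nat.zero_le _
    | succ t ih =>
      exact (ih (by omega)).trans_lt <| Submodule.finrank_lt_finrank_of_lt <|
        lt_of_le_not_ge (krylov_mono t.le_succ) (h t (by omega))
  have := hgrow _ le_rfl
  have := Submodule.finrank_le (krylov f x (finrank 𝕜 V + 1))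
  omega

theorem prod_apply_mem_krylov_finrank (w : List ι) :
    (w.map f).prod x ∈ krylov f x (finrank 𝕜 V) := by
  obtain ⟨t, ht, hstab⟩ := exists_krylov_succ_le (f := f) (x := x)
  exact krylov_mono ht (krylov_le_of_succ_le hstab _ (mem_krylov w.length.lt_succ_self))

end Krylov

namespace Matrix

variable {ι : Type*} [Fintype ι]

theorem exists_nonneg_mulVec_eq_self_of_mem_colStochastic [DecidableEq ι] [Nonempty ι]
    {M : Matrix ι ι ℝ} (hM : M ∈ colStochastic ℝ ι) : ∃ v : ι → ℝ, v ≠ 0 ∧ 0 ≤ v ∧ M *ᵥ v = v := by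
  obtain ⟨v, hv0, hv⟩ : ∃ v ≠ 0, (M - 1) *ᵥ v = 0 := by
    rw [exists_mulVec_eq_zero_iff, ← exists_vecMul_eq_zero_iff]
    exact ⟨1, one_ne_zero, by
      rw [vecMul_sub, one_vecMul_of_mem_colStochastic hM, vecMul_one, sub_self]⟩
  rw [sub_mulVec, one_mulVec, sub_eq_zero] at hv
  -- `|v|` is subinvariant, and a column-stochastic matrix preserves its total mass
  have hsub : ∀ i, |v i| ≤ (M *ᵥ |v|) i := fun i => calc
    |v i| = |∑ j, M i j * v j| := congrArg abs (congrFun hv i).symm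
    _ ≤ ∑ j, |M i j * v j| := abs_sum_le_sum_abs _ _
    _ = (M *ᵥ |v|) i := by
      simp only [abs_mul, abs_of_nonneg (nonneg_of_mem_colStochastic hM)]; rfl
  have hmass : ∑ i, |v i| = ∑ i, (M *ᵥ |v|) i := (sum_mulVec_of_mem_colStochastic hM).symm
  refine ⟨|v|, fun h => hv0 (funext fun i => abs_eq_zero.1 (congrFun h i)), abs_nonneg v, ?_⟩
  funext i
  exact ((sum_eq_sum_iff_of_le fun i _ => hsub i).1 hmass i (mem_univ i)).symm

theorem apply_eq_of_mulVec_apply_eq {M : Matrix ι ι ℝ} {f : ι → ℝ} {i j : ι}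
    (hM : ∀ j, 0 ≤ M i j) (hrow : ∑ j, M i j = 1) (hfix : (M *ᵥ f) i = f i)
    (hle : ∀ j, M i j ≠ 0 → f j ≤ f i) (hj : 0 < M i j) : f j = f i := by
  have hterm : ∀ j ∈ univ, M i j * f j ≤ M i j * f i := fun j _ => by
    rcases eq_or_ne (M i j) 0 with h | h
    · simp [h]
    · exact mul_le_mul_of_nonneg_left (hle j h) (hM j)
  have hsum : ∑ j, M i j * f j = ∑ j, M i j * f i := by
    rw [← sum_mul, hrow, one_mul]; exact hfix
  exact mul_left_cancel₀ hj.ne' ((sum_eq_sum_iff_of_le hterm).1 hsum j (mem_univ j))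

end Matrix

theorem card_image_sum_le_of_eq_on {ι : Type*} [Fintype ι] [DecidableEq ι] (E : Finset ι)
    (α : ι → ℝ) {x : ℝ} (hE : ∀ i ∈ E, α i = x) :
    #((univ : Finset (Finset ι)).image fun T => ∑ i ∈ T, α i) ≤ (#E + 1) * 2 ^ #Eᶜ := by
  have hsub : (univ : Finset (Finset ι)).image (fun T => ∑ i ∈ T, α i) ⊆
      (range (#E + 1) ×ˢ Eᶜ.powerset).image fun mU => mU.1 * x + ∑ i ∈ mU.2, α i := by
    intro _ hx
    obtain ⟨T, -, rfl⟩ := mem_image.1 hx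
    refine mem_image.2 ⟨(#(T ∩ E), T \ E), ?_, ?_⟩
    · simp only [mem_product, mem_range, mem_powerset]
      exact ⟨Nat.lt_succ_of_le (card_le_card inter_subset_right),
        fun i hi => mem_compl.2 (mem_sdiff.1 hi).2⟩
    · rw [← sum_inter_add_sum_sdiff T E, sum_congr rfl fun i hi => hE i (mem_inter.1 hi).2,
        sum_const, nsmul_eq_mul]
  calc _ ≤ _ := card_le_card hsub
    _ ≤ _ := card_image_le
    _ = _ := by rw [card_product, card_range, card_powerset]

section Automaton

variable {n k : ℕ} (δ : Fin n → Fin k → Fin n)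

@[simp] lemma act_nil (q : Fin n) : act δ [] q = q := rfl

@[simp] lemma act_cons (a : Fin k) (w : List (Fin k)) (q : Fin n) :
    act δ (a :: w) q = act δ w (δ q a) := rfl

@[simp] lemma act_append (u v : List (Fin k)) (q : Fin n) :
    act δ (u ++ v) q = act δ v (act δ u q) :=
  List.foldl_append

def wordPreimage (w : List (Fin k)) (T : Finset (Fin n)) : Finset (Fin n) :=
  {q | act δ w q ∈ T}

variable {δ}

@[simp] lemma mem_wordPreimage {w : List (Fin k)} {T : Finset (Fin n)} {q : Fin n} :
    q ∈ wordPreimage δ w T ↔ act δ w q ∈ T := by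
  simp [wordPreimage]

@[simp] lemma wordPreimage_nil (T : Finset (Fin n)) : wordPreimage δ [] T = T := by
  ext; simp

lemma wordPreimage_append (u v : List (Fin k)) (T : Finset (Fin n)) :
    wordPreimage δ (u ++ v) T = wordPreimage δ u (wordPreimage δ v T) := by
  ext; simp

@[simp] lemma wordPreimage_univ (w : List (Fin k)) : wordPreimage δ w univ = univ := by
  ext; simp

lemma isReset_of_wordPreimage_eq_univ {w : List (Fin k)} {s : Fin n}
    (h : wordPreimage δ w {s} = univ) : IsReset δ w := fun p q => by
  have hp := mem_wordPreimage.1 (h ▸ mem_univ p)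
  have hq := mem_wordPreimage.1 (h ▸ mem_univ q)
  rw [mem_singleton] at hp hq
  rw [hp, hq]

lemma exists_wordPreimage_eq_univ (hsc : ∀ s q : Fin n, ∃ w : List (Fin k), act δ w s = q)
    (hsync : ∃ w, IsReset δ w) {T : Finset (Fin n)} (hT : T.Nonempty) :
    ∃ w, wordPreimage δ w T = univ := by
  obtain ⟨w, hw⟩ := hsync
  obtain ⟨t, ht⟩ := hT
  obtain ⟨v, hv⟩ := hsc (act δ w t) t
  refine ⟨w ++ v, eq_univ_of_forall fun q => ?_⟩
  rw [mem_wordPreimage, act_append, hw q t, hv]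
  exact ht

lemma wordMat_cons (a : Fin k) (w : List (Fin k)) :
    wordMat δ (a :: w) = wordMat δ w * letterMat δ a := by
  simp [wordMat]

lemma wordMat_apply (w : List (Fin k)) (i q : Fin n) :
    wordMat δ w i q = if act δ w q = i then 1 else 0 := by
  induction w generalizing q with
  | nil => simp [wordMat, Matrix.one_apply, eq_comm]
  | cons a w ih =>
    rw [wordMat_cons, Matrix.mul_apply, act_cons]
    simp [ih, letterMat]

lemma sum_mulVec_wordMat (w : List (Fin k)) (T : Finset (Fin n)) (x : Fin n → ℝ) :
    ∑ i ∈ T, (wordMat δ w *ᵥ x) i = ∑ q ∈ wordPreimage δ w T, x q := by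
  simp only [Matrix.mulVec, dotProduct, wordMat_apply, ite_mul, one_mul, zero_mul]
  rw [sum_comm, wordPreimage, sum_filter]
  simp [Finset.sum_ite_eq]

end Automaton

section Averaging

variable {n k : ℕ} {δ : Fin n → Fin k → Fin n} {p : Fin k → ℝ}

variable (δ p) in
def avgMat : Matrix (Fin n) (Fin n) ℝ :=
  ∑ a, p a • letterMat δ a

lemma avgMat_apply (i j : Fin n) :
    avgMat δ p i j = ∑ a, if δ j a = i then p a else 0 := by
  simp [avgMat, Matrix.sum_apply, letterMat]

lemma avgMat_apply_nonneg (hp : ∀ a, 0 ≤ p a) (i j : Fin n) : 0 ≤ avgMat δ p i j := by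
  rw [avgMat_apply]
  exact sum_nonneg fun a _ => by split_ifs <;> simp [hp a]

lemma letterMat_mem_colStochastic (a : Fin k) :
    letterMat δ a ∈ Matrix.colStochastic ℝ (Fin n) := by
  rw [Matrix.mem_colStochastic_iff_sum]
  exact ⟨fun i j => by unfold letterMat; split_ifs <;> norm_num, fun j => by simp [letterMat]⟩

lemma avgMat_mem_colStochastic (hp : ∀ a, 0 ≤ p a) (hp1 : ∑ a, p a = 1) :
    avgMat δ p ∈ Matrix.colStochastic ℝ (Fin n) :=
  Matrix.convex_colStochastic.sum_mem (fun a _ => hp a) hp1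
    fun a _ => letterMat_mem_colStochastic a

lemma le_avgMat_apply (hp : ∀ a, 0 ≤ p a) (q : Fin n) (a : Fin k) :
    p a ≤ avgMat δ p (δ q a) q := by
  rw [avgMat_apply]
  refine le_of_eq_of_le (if_pos rfl).symm
    (single_le_sum (f := fun b => if δ q b = δ q a then p b else 0) (fun b _ => ?_) (mem_univ a))
  split_ifs <;> simp [hp b]

lemma sum_mulVec_avgMat (T : Finset (Fin n)) (x : Fin n → ℝ) :
    ∑ i ∈ T, (avgMat δ p *ᵥ x) i = ∑ a, p a * ∑ q ∈ wordPreimage δ [a] T, x q := by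
  simp only [avgMat, Matrix.sum_mulVec, Matrix.smul_mulVec, Finset.sum_apply, Pi.smul_apply,
    smul_eq_mul]
  rw [sum_comm]
  refine sum_congr rfl fun a _ => ?_
  rw [← mul_sum, ← sum_mulVec_wordMat]
  simp [wordMat]

end Averaging

section Stationary

variable {n k : ℕ} {δ : Fin n → Fin k → Fin n} {p : Fin k → ℝ}

lemma pos_of_avgMat_mulVec_eq_self (hsc : ∀ s q : Fin n, ∃ w : List (Fin k), act δ w s = q)
    (hp : ∀ a, 0 < p a) {α : Fin n → ℝ} (h0 : 0 ≤ α) (hne : α ≠ 0)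
    (hst : avgMat δ p *ᵥ α = α) (i : Fin n) : 0 < α i := by
  have hstep : ∀ q a, 0 < α q → 0 < α (δ q a) := fun q a hq => calc
    0 < p a * α q := mul_pos (hp a) hq
    _ ≤ avgMat δ p (δ q a) q * α q :=
      mul_le_mul_of_nonneg_right (le_avgMat_apply (fun b => (hp b).le) q a) hq.le
    _ ≤ (avgMat δ p *ᵥ α) (δ q a) :=
      single_le_sum (f := fun j => avgMat δ p (δ q a) j * α j)
        (fun j _ => mul_nonneg (avgMat_apply_nonneg (fun b => (hp b).le) _ j) (h0 j)) (mem_univ q)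
    _ = α (δ q a) := by rw [hst]
  have hword : ∀ w q, 0 < α q → 0 < α (act δ w q) := by
    intro w
    induction w with
    | nil => exact fun q hq => hq
    | cons a w ih => exact fun q hq => ih _ (hstep q a hq)
  obtain ⟨i₀, hi₀⟩ : ∃ i, α i ≠ 0 := Function.ne_iff.1 hne
  obtain ⟨w, rfl⟩ := hsc i₀ i
  exact hword w i₀ ((h0 i₀).lt_of_ne' hi₀)

theorem exists_pos_avgMat_mulVec_eq_self [Nonempty (Fin n)]
    (hsc : ∀ s q : Fin n, ∃ w : List (Fin k), act δ w s = q)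
    (hp : ∀ a, 0 < p a) (hp1 : ∑ a, p a = 1) :
    ∃ α : Fin n → ℝ, (∀ i, 0 < α i) ∧ avgMat δ p *ᵥ α = α := by
  obtain ⟨α, hne, h0, hst⟩ := Matrix.exists_nonneg_mulVec_eq_self_of_mem_colStochastic
    (avgMat_mem_colStochastic (δ := δ) (fun a => (hp a).le) hp1)
  exact ⟨α, pos_of_avgMat_mulVec_eq_self hsc hp h0 hne hst, hst⟩

end Stationary

section Entry

variable {n k : ℕ} {δ : Fin n → Fin k → Fin n} {p : Fin k → ℝ} {E : Finset (Fin n)} {s : Fin n}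

lemma mem_of_forall_pred_mem (hsc : ∀ s q : Fin n, ∃ w : List (Fin k), act δ w s = q)
    {P : Set (Fin n)} (hP : ∀ q a, δ q a ∈ P → δ q a ≠ s → q ∈ P) {i : Fin n} (hi : i ∈ P) :
    s ∈ P := by
  suffices h : ∀ w q, act δ w q ∈ P → q ∈ P ∨ s ∈ P by
    obtain ⟨w, rfl⟩ := hsc s i
    exact (h w s hi).elim id id
  intro w
  induction w with
  | nil => exact fun q hq => Or.inl hq
  | cons a w ih =>
    intro q hq
    rcases ih (δ q a) hq with h | h
    · by_cases hs : δ q a = s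
      · exact Or.inr (hs ▸ h)
      · exact Or.inl (hP q a h hs)
    · exact Or.inr h

lemma apply_le_apply_entry (hsc : ∀ s q : Fin n, ∃ w : List (Fin k), act δ w s = q)
    (hp : ∀ a, 0 < p a) (hsE : s ∈ E) (hentry : ∀ q a, δ q a ∈ E → δ q a ≠ s → q ∈ E)
    (hrow : ∀ i ∈ E, i ≠ s → ∑ j, avgMat δ p i j = 1) {f : Fin n → ℝ}
    (hf : ∀ i ∈ E, i ≠ s → (avgMat δ p *ᵥ f) i = f i) (i : Fin n) (hi : i ∈ E) : f i ≤ f s := by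
  obtain ⟨m, hmE, hmax⟩ := E.exists_max_image f ⟨s, hsE⟩
  suffices hs : s ∈ {i | i ∈ E ∧ f i = f m} from hs.2 ▸ hmax i hi
  refine mem_of_forall_pred_mem hsc (fun q a ⟨hE, hm⟩ hs => ⟨hentry q a hE hs, ?_⟩) ⟨hmE, rfl⟩
  rw [← hm]
  refine Matrix.apply_eq_of_mulVec_apply_eq (avgMat_apply_nonneg (fun b => (hp b).le) _)
    (hrow _ hE hs) (hf _ hE hs) (fun j hj => ?_)
    ((hp a).trans_le (le_avgMat_apply (fun b => (hp b).le) q a))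
  obtain ⟨b, hb⟩ : ∃ b, δ j b = δ q a := by
    by_contra! h
    simp [avgMat_apply, h] at hj
  rw [hm]
  exact hmax j (hentry j b (hb ▸ hE) (hb ▸ hs))

theorem apply_eq_apply_entry (hsc : ∀ s q : Fin n, ∃ w : List (Fin k), act δ w s = q)
    (hp : ∀ a, 0 < p a) (hsE : s ∈ E) (hentry : ∀ q a, δ q a ∈ E → δ q a ≠ s → q ∈ E)
    (hrow : ∀ i ∈ E, i ≠ s → ∑ j, avgMat δ p i j = 1) {α : Fin n → ℝ}
    (hst : avgMat δ p *ᵥ α = α) (i : Fin n) (hi : i ∈ E) : α i = α s := by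
  refine le_antisymm
    (apply_le_apply_entry hsc hp hsE hentry hrow (fun j _ _ => by rw [hst]) i hi) ?_
  have := apply_le_apply_entry hsc hp hsE hentry hrow (f := -α)
    (fun j _ _ => by rw [Matrix.mulVec_neg, hst]) i hi
  simpa using this

end Entry

section Extension

variable {n k : ℕ} {δ : Fin n → Fin k → Fin n}

lemma toLinAlgEquiv'_prod_letterMat_apply (w : List (Fin k)) (x : Fin n → ℝ) :
    (w.map fun a => Matrix.toLinAlgEquiv' (letterMat δ a)).prod x = wordMat δ w.reverse *ᵥ x := by
  rw [wordMat, List.reverse_reverse, ← Matrix.toLinAlgEquiv'_apply, map_list_prod, List.map_map]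
  rfl

theorem sum_wordPreimage_eq_of_forall_length_lt {x : Fin n → ℝ} (hx : ∑ i, x i ≠ 0)
    {T : Finset (Fin n)}
    (h : ∀ u : List (Fin k), u.length < n → ∑ q ∈ wordPreimage δ u T, x q = ∑ q ∈ T, x q)
    (w : List (Fin k)) : ∑ q ∈ wordPreimage δ w T, x q = ∑ q ∈ T, x q := by
  -- `φ` vanishes on `[u] x` iff `u` preserves the weight of `T`, so it vanishes on the Krylov
  -- space of the words of length `< n`, which already contains every `[w] x`
  let φ : (Fin n → ℝ) →ₗ[ℝ] ℝ :=
    (∑ i, x i) • ∑ i ∈ T, LinearMap.proj i - (∑ i ∈ T, x i) • ∑ i, LinearMap.proj i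
  have hφ : ∀ w, φ (wordMat δ w *ᵥ x) =
      (∑ i, x i) * (∑ q ∈ wordPreimage δ w T, x q - ∑ q ∈ T, x q) := fun w => by
    have := sum_mulVec_wordMat (δ := δ) w univ x
    simp only [wordPreimage_univ] at this
    simp only [φ, LinearMap.sub_apply, LinearMap.smul_apply, LinearMap.coe_sum,
      LinearMap.coe_proj, Finset.sum_apply, Function.eval, sum_mulVec_wordMat, smul_eq_mul, this]
    ring
  have hker : krylov (fun a => Matrix.toLinAlgEquiv' (letterMat δ a)) x n ≤ LinearMap.ker φ := by
    refine Submodule.span_le.2 ?_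
    rintro _ ⟨u, hu, rfl⟩
    dsimp only
    rw [SetLike.mem_coe, LinearMap.mem_ker, toLinAlgEquiv'_prod_letterMat_apply, hφ,
      h _ (by simpa using hu), sub_self, mul_zero]
  have hw := prod_apply_mem_krylov_finrank (𝕜 := ℝ)
    (f := fun a => Matrix.toLinAlgEquiv' (letterMat δ a)) (x := x) w.reverse
  rw [Module.finrank_fin_fun] at hw
  replace hw := hker hw
  rw [LinearMap.mem_ker, toLinAlgEquiv'_prod_letterMat_apply, List.reverse_reverse, hφ] at hw
  linarith [(mul_eq_zero.1 hw).resolve_left hx]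

variable {p : Fin k → ℝ} {α : Fin n → ℝ}

theorem sum_wordPreimage_eq_of_forall_le (hp : ∀ a, 0 < p a) (hp1 : ∑ a, p a = 1)
    (hst : avgMat δ p *ᵥ α = α) {T : Finset (Fin n)} {L : ℕ}
    (h : ∀ u : List (Fin k), u.length ≤ L → ∑ q ∈ wordPreimage δ u T, α q ≤ ∑ q ∈ T, α q)
    (u : List (Fin k)) (hu : u.length ≤ L) :
    ∑ q ∈ wordPreimage δ u T, α q = ∑ q ∈ T, α q := by
  induction u with
  | nil => rw [wordPreimage_nil]
  | cons a w ih =>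
    have hw : w.length ≤ L := by simp only [List.length_cons] at hu; omega
    have hle : ∀ b ∈ univ, p b * ∑ q ∈ wordPreimage δ (b :: w) T, α q ≤ p b * ∑ q ∈ T, α q :=
      fun b _ => mul_le_mul_of_nonneg_left (h (b :: w) (by simpa using hu)) (hp b).le
    have havg : ∑ b, p b * ∑ q ∈ wordPreimage δ (b :: w) T, α q = ∑ b, p b * ∑ q ∈ T, α q := by
      rw [← sum_mul, hp1, one_mul, ← ih hw]
      conv_rhs => rw [← hst, sum_mulVec_avgMat]
      simp only [← wordPreimage_append, List.singleton_append]
    exact mul_left_cancel₀ (hp a).ne' ((sum_eq_sum_iff_of_le hle).1 havg a (mem_univ a))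

theorem exists_sum_wordPreimage_gt (hsc : ∀ s q : Fin n, ∃ w : List (Fin k), act δ w s = q)
    (hsync : ∃ w, IsReset δ w) (hp : ∀ a, 0 < p a) (hp1 : ∑ a, p a = 1)
    (hα : ∀ i, 0 < α i) (hst : avgMat δ p *ᵥ α = α) {T : Finset (Fin n)} (hT : T.Nonempty)
    (hTu : T ≠ univ) :
    ∃ u : List (Fin k), u.length ≤ n - 1 ∧ ∑ q ∈ T, α q < ∑ q ∈ wordPreimage δ u T, α q := by
  by_contra! h
  have hall := sum_wordPreimage_eq_of_forall_length_lt
    (sum_pos (fun i _ => hα i) (hT.mono (subset_univ T))).ne'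
    fun u hu => sum_wordPreimage_eq_of_forall_le hp hp1 hst h u (by omega)
  obtain ⟨w, hw⟩ := exists_wordPreimage_eq_univ hsc hsync hT
  obtain ⟨i, hi⟩ : ∃ i, i ∉ T := by simpa [eq_univ_iff_forall] using hTu
  have hlt : ∑ q ∈ T, α q < ∑ q, α q :=
    sum_lt_sum_of_subset (subset_univ T) (mem_univ i) hi (hα i) fun j _ _ => (hα j).le
  rw [← hw, hall w] at hlt
  exact lt_irrefl _ hlt

end Extension

section Potential

variable {n k : ℕ} {δ : Fin n → Fin k → Fin n} {α : Fin n → ℝ}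

theorem exists_wordPreimage_eq_univ_length_le (hα : ∀ i, 0 ≤ α i) {L : ℕ}
    (hext : ∀ T : Finset (Fin n), T.Nonempty → T ≠ univ →
      ∃ u : List (Fin k), u.length ≤ L ∧ ∑ q ∈ T, α q < ∑ q ∈ wordPreimage δ u T, α q)
    (V : Finset ℝ) (hV : ∀ T : Finset (Fin n), ∑ q ∈ T, α q ∈ V)
    (T : Finset (Fin n)) (hT : T.Nonempty) :
    ∃ w : List (Fin k), wordPreimage δ w T = univ ∧
      w.length ≤ #{v ∈ V | ∑ q ∈ T, α q < v} * L := by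
  induction hm : #{v ∈ V | ∑ q ∈ T, α q < v} using Nat.strong_induction_on generalizing T with
  | _ m ih =>
  by_cases hTu : T = univ
  · exact ⟨[], by rw [wordPreimage_nil, hTu], by simp⟩
  obtain ⟨u, hu, hlt⟩ := hext T hT hTu
  set T' := wordPreimage δ u T
  have hT' : T'.Nonempty := by
    rw [nonempty_iff_ne_empty]
    rintro h
    rw [h, sum_empty] at hlt
    exact hlt.not_ge (sum_nonneg fun i _ => hα i)
  have hcard : #{v ∈ V | ∑ q ∈ T', α q < v} < m := by
    rw [← hm]
    refine card_lt_card ((ssubset_iff_of_subset fun v hv => ?_).2 ⟨∑ q ∈ T', α q, ?_, ?_⟩)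
    · simp only [mem_filter] at hv ⊢
      exact ⟨hv.1, hlt.trans hv.2⟩
    · exact mem_filter.2 ⟨hV T', hlt⟩
    · simp
  obtain ⟨w, hw, hwlen⟩ := ih _ hcard T' hT' rfl
  refine ⟨w ++ u, by rw [wordPreimage_append, hw], ?_⟩
  rw [List.length_append]
  calc w.length + u.length ≤ #{v ∈ V | ∑ q ∈ T', α q < v} * L + L := add_le_add hwlen hu
    _ = (#{v ∈ V | ∑ q ∈ T', α q < v} + 1) * L := by ring
    _ ≤ m * L := Nat.mul_le_mul_right L hcard

end Potential

theorem stmt11_general {n k : ℕ} (δ : Fin n → Fin k → Fin n)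
    (hsc : ∀ s q : Fin n, ∃ w : List (Fin k), act δ w s = q)
    (hsync : ∃ w, IsReset δ w)
    (c : ℕ) (hqe : QuasiEulerian δ c)
    (r : ℕ)
    (hr : IsLeast {t : ℕ | ∃ w : List (Fin k), IsReset δ w ∧ w.length = t} r) :
    r ≤ 2 ^ c * (n - c + 1) * (n - 1) := by
  obtain ⟨E, s, p, hsE, hE, hp, hp1, hentry, hrow⟩ := hqe
  have : Nonempty (Fin n) := ⟨s⟩
  have hEc : #Eᶜ = c := by
    have := card_pos.2 ⟨s, hsE⟩
    rw [card_compl, Fintype.card_fin]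
    omega
  obtain ⟨α, hα, hst⟩ := exists_pos_avgMat_mulVec_eq_self hsc hp hp1
  set V := (univ : Finset (Finset (Fin n))).image fun T => ∑ q ∈ T, α q
  obtain ⟨w, hw, hwlen⟩ := exists_wordPreimage_eq_univ_length_le (fun i => (hα i).le)
    (fun T hT hTu => exists_sum_wordPreimage_gt hsc hsync hp hp1 hα hst hT hTu)
    V (fun T => mem_image_of_mem _ (mem_univ T)) {s} (singleton_nonempty s)
  have hV : #V ≤ (n - c + 1) * 2 ^ c :=
    hE ▸ hEc ▸ card_image_sum_le_of_eq_on E α (apply_eq_apply_entry hsc hp hsE hentry hrow hst)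
  calc r ≤ w.length := hr.2 ⟨w, isReset_of_wordPreimage_eq_univ hw, rfl⟩
    _ ≤ #V * (n - 1) := hwlen.trans (Nat.mul_le_mul_right _ (card_filter_le _ _))
    _ ≤ 2 ^ c * (n - c + 1) * (n - 1) := by
      rw [mul_comm (2 ^ c)]
      exact Nat.mul_le_mul_right _ hV

/-- If `A` is quasi-Eulerian with respect to `c`, then the reset length is at
most `2^c (n-c+1)(n-1)`. -/
theorem stmt11 {n k : ℕ} (hn : 2 ≤ n) (δ : Fin n → Fin k → Fin n)
    (hsc : ∀ s q : Fin n, ∃ w : List (Fin k), act δ w s = q)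
    (hsync : ∃ w, IsReset δ w)
    (c : ℕ) (hqe : QuasiEulerian δ c)
    (r : ℕ)
    (hr : IsLeast {t : ℕ | ∃ w : List (Fin k), IsReset δ w ∧ w.length = t} r) :
    r ≤ 2 ^ c * (n - c + 1) * (n - 1) :=
  stmt11_general δ hsc hsync c hqe r hr
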